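/- arXiv:2301.03476 — 4 statements merged into one kernel-verified Lean document; each statement's English description precedes it below -/
import Mathlib

section
/- Let δ > 0 and let (a₁,b₁,c₁,d₁), (a₂,b₂,c₂,d₂) ∈ ℝ⁴ with a₁, a₂, c₁, c₂ ≥ δ. Then |A(a₁,b₁,c₁,d₁) − A(a₂,b₂,c₂,d₂)| ≤ (2/δ)(|a₁−a₂| + |c₁−c₂|) + (1/δ)(|b₁−b₂| + |d₁−d₂|). -/
noncomputable def pp (x : ℝ) : ℝ := max x 0

noncomputable def funA (a b c d : ℝ) : ℝ :=
  min (1 - pp a / max (pp a) (pp b)) (1 - pp c / max (pp c) (pp d))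

lemma aux_lip (δ a b a' b' : ℝ) (hδ : 0 < δ) (ha : δ ≤ a) (ha' : δ ≤ a') :
    |pp a / max (pp a) (pp b) - pp a' / max (pp a') (pp b')| ≤
      2 / δ * |a - a'| + 1 / δ * |b - b'| := by
  have hpa : pp a = a := max_eq_left (le_trans hδ.le ha)
  have hpa' : pp a' = a' := max_eq_left (le_trans hδ.le ha')
  rw [hpa, hpa']
  set M := max a (pp b) with hM
  set M' := max a' (pp b') with hM'
  have hMδ : δ ≤ M := le_trans ha (le_max_left _ _)
  have hM'δ : δ ≤ M' := le_trans ha' (le_max_left _ _)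
  have hM0 : 0 < M := lt_of_lt_of_le hδ hMδ
  have hM'0 : 0 < M' := lt_of_lt_of_le hδ hM'δ
  have haM : a ≤ M := le_max_left _ _
  have hMM' : |M - M'| ≤ |a - a'| + |b - b'| := by
    have h1 : |M - M'| ≤ max |a - a'| |pp b - pp b'| := abs_max_sub_max_le_max _ _ _ _
    have h2 : |pp b - pp b'| ≤ |b - b'| := by
      have := abs_max_sub_max_le_max b 0 b' 0
      simpa [pp] using this
    calc |M - M'| ≤ max |a - a'| |pp b - pp b'| := h1
      _ ≤ max |a - a'| |b - b'| := max_le_max le_rfl h2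
      _ ≤ |a - a'| + |b - b'| := max_le (le_add_of_nonneg_right (abs_nonneg _))
          (le_add_of_nonneg_left (abs_nonneg _))
  have key : |a / M - a' / M'| ≤ |a / M - a / M'| + |a / M' - a' / M'| := by
    have := abs_sub_abs_le_abs_sub (a / M - a / M') 0
    calc |a / M - a' / M'| = |(a / M - a / M') + (a / M' - a' / M')| := by ring_nf
      _ ≤ _ := abs_add_le _ _
  have h1 : |a / M - a / M'| ≤ 1 / δ * (|a - a'| + |b - b'|) := by
    have : a / M - a / M' = a * (M' - M) / (M * M') := by
      field_simp
    rw [this, abs_div, abs_mul, abs_of_pos (mul_pos hM0 hM'0)]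
    rw [div_le_iff₀ (mul_pos hM0 hM'0)]
    have haa : |a| = a := abs_of_pos (lt_of_lt_of_le hδ ha)
    have hMab : |M' - M| ≤ |a - a'| + |b - b'| := by rw [abs_sub_comm]; exact hMM'
    calc |a| * |M' - M| ≤ M * |M' - M| := by
          apply mul_le_mul_of_nonneg_right _ (abs_nonneg _)
          rw [haa]; exact haM
      _ ≤ M * (|a - a'| + |b - b'|) := by
          apply mul_le_mul_of_nonneg_left hMab hM0.le
      _ ≤ 1 / δ * (|a - a'| + |b - b'|) * (M * M') := by
          have hnn : 0 ≤ |a - a'| + |b - b'| := by positivity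
          have : M * δ ≤ M * M' := mul_le_mul_of_nonneg_left hM'δ hM0.le
          rw [div_mul_eq_mul_div, one_mul, div_mul_eq_mul_div, le_div_iff₀ hδ]
          calc M * (|a - a'| + |b - b'|) * δ = (|a - a'| + |b - b'|) * (M * δ) := by ring
            _ ≤ (|a - a'| + |b - b'|) * (M * M') := mul_le_mul_of_nonneg_left this hnn
            _ = (|a - a'| + |b - b'|) * (M * M') := rfl
  have h2 : |a / M' - a' / M'| ≤ 1 / δ * |a - a'| := by
    rw [div_sub_div_same, abs_div, abs_of_pos hM'0, div_le_iff₀ hM'0]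
    calc |a - a'| = 1 / δ * |a - a'| * δ := by field_simp
      _ ≤ 1 / δ * |a - a'| * M' := by
          apply mul_le_mul_of_nonneg_left hM'δ; positivity
  calc |a / M - a' / M'| ≤ |a / M - a / M'| + |a / M' - a' / M'| := key
    _ ≤ 1 / δ * (|a - a'| + |b - b'|) + 1 / δ * |a - a'| := add_le_add h1 h2
    _ = 2 / δ * |a - a'| + 1 / δ * |b - b'| := by ring

theorem funA_lipschitz_four (δ a₁ b₁ c₁ d₁ a₂ b₂ c₂ d₂ : ℝ) (hδ : 0 < δ)
    (ha₁ : δ ≤ a₁) (ha₂ : δ ≤ a₂) (hc₁ : δ ≤ c₁) (hc₂ : δ ≤ c₂) :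
    |funA a₁ b₁ c₁ d₁ - funA a₂ b₂ c₂ d₂| ≤
      2 / δ * (|a₁ - a₂| + |c₁ - c₂|) + 1 / δ * (|b₁ - b₂| + |d₁ - d₂|) := by
  unfold funA
  have hmin := abs_min_sub_min_le_max (1 - pp a₁ / max (pp a₁) (pp b₁))
    (1 - pp c₁ / max (pp c₁) (pp d₁)) (1 - pp a₂ / max (pp a₂) (pp b₂))
    (1 - pp c₂ / max (pp c₂) (pp d₂))
  have e1 : (1 - pp a₁ / max (pp a₁) (pp b₁)) - (1 - pp a₂ / max (pp a₂) (pp b₂))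
      = -(pp a₁ / max (pp a₁) (pp b₁) - pp a₂ / max (pp a₂) (pp b₂)) := by ring
  have e2 : (1 - pp c₁ / max (pp c₁) (pp d₁)) - (1 - pp c₂ / max (pp c₂) (pp d₂))
      = -(pp c₁ / max (pp c₁) (pp d₁) - pp c₂ / max (pp c₂) (pp d₂)) := by ring
  rw [e1, e2, abs_neg, abs_neg] at hmin
  have hA := aux_lip δ a₁ b₁ a₂ b₂ hδ ha₁ ha₂
  have hC := aux_lip δ c₁ d₁ c₂ d₂ hδ hc₁ hc₂
  calc _ ≤ _ := hmin
    _ ≤ (2 / δ * |a₁ - a₂| + 1 / δ * |b₁ - b₂|) +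
        (2 / δ * |c₁ - c₂| + 1 / δ * |d₁ - d₂|) := by
      apply max_le
      · exact le_trans hA (le_add_of_nonneg_right (by positivity))
      · exact le_trans hC (le_add_of_nonneg_left (by positivity))
    _ = 2 / δ * (|a₁ - a₂| + |c₁ - c₂|) + 1 / δ * (|b₁ - b₂| + |d₁ - d₂|) := by ring
end

section
/- Let δ > 0 and let (a₁,b₁,c₁), (a₂,b₂,c₂) ∈ ℝ³ with a₁, a₂ ≥ δ. Then |A(a₁,b₁,c₁,b₁) − A(a₂,b₂,c₂,b₂)| ≤ (2/δ)(|a₁−a₂| + |b₁−b₂| + |c₁−c₂|). -/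
lemma pp_abs_sub (x y : ℝ) : |pp x - pp y| ≤ |x - y| := by
  refine (abs_max_sub_max_le_max x 0 y 0).trans ?_
  simp [abs_nonneg]

lemma ratio_le_one (x y : ℝ) (hx : 0 ≤ x) : x / max x y ≤ 1 := by
  rcases le_or_gt (max x y) 0 with h | h
  · have hx0 : x = 0 := le_antisymm ((le_max_left x y).trans h) hx
    simp [hx0]
  · exact div_le_one_of_le₀ (le_max_left x y) h.le

lemma key_div (δ x₁ y₁ x₂ y₂ : ℝ) (hδ : 0 < δ) (hx₂ : 0 ≤ x₂)
    (h1 : δ ≤ max x₁ y₁) (h2 : δ ≤ max x₂ y₂) :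
    |x₁ / max x₁ y₁ - x₂ / max x₂ y₂| ≤
      (|x₁ - x₂| + |max x₁ y₁ - max x₂ y₂|) / δ := by
  set M₁ := max x₁ y₁ with hM₁def
  set M₂ := max x₂ y₂ with hM₂def
  have hM₁ : 0 < M₁ := hδ.trans_le h1
  have hM₂ : 0 < M₂ := hδ.trans_le h2
  have heq : x₁ / M₁ - x₂ / M₂ = (x₁ - x₂) / M₁ + (x₂ / M₂) * ((M₂ - M₁) / M₁) := by
    field_simp
    ring
  rw [heq]
  have hb1 : |(x₁ - x₂) / M₁| ≤ |x₁ - x₂| / δ := by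
    rw [abs_div, abs_of_pos hM₁]
    exact div_le_div_of_nonneg_left (abs_nonneg _) hδ h1
  have hb2 : |(x₂ / M₂) * ((M₂ - M₁) / M₁)| ≤ |M₁ - M₂| / δ := by
    rw [abs_mul, abs_div, abs_div, abs_of_pos hM₁, abs_of_pos hM₂, abs_of_nonneg hx₂]
    have h1' : x₂ / M₂ ≤ 1 := div_le_one_of_le₀ (le_max_left x₂ y₂) hM₂.le
    have h2' : |M₂ - M₁| / M₁ ≤ |M₁ - M₂| / δ := by
      rw [abs_sub_comm]
      exact div_le_div_of_nonneg_left (abs_nonneg _) hδ h1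
    calc x₂ / M₂ * (|M₂ - M₁| / M₁) ≤ 1 * (|M₁ - M₂| / δ) :=
          mul_le_mul h1' h2' (by positivity) zero_le_one
      _ = |M₁ - M₂| / δ := one_mul _
  calc |(x₁ - x₂) / M₁ + (x₂ / M₂) * ((M₂ - M₁) / M₁)|
      ≤ |(x₁ - x₂) / M₁| + |(x₂ / M₂) * ((M₂ - M₁) / M₁)| := abs_add_le _ _
    _ ≤ |x₁ - x₂| / δ + |M₁ - M₂| / δ := add_le_add hb1 hb2
    _ = (|x₁ - x₂| + |M₁ - M₂|) / δ := by ring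

lemma funA_nonneg (a b c d : ℝ) : 0 ≤ funA a b c d := by
  unfold funA
  refine le_min (by linarith [ratio_le_one (pp a) (pp b) (le_max_right a 0)]) ?_
  linarith [ratio_le_one (pp c) (pp d) (le_max_right c 0)]

lemma funA_zero (a b c : ℝ) (ha : 0 < a) (hba : b ≤ a) : funA a b c b = 0 := by
  have hpa : pp a = a := max_eq_left ha.le
  have hmax : max (pp a) (pp b) = a := by
    rw [hpa]
    exact max_eq_left (max_le hba ha.le)
  unfold funA
  rw [hmax, hpa, div_self ha.ne']
  simp only [sub_self]
  exact min_eq_left (by linarith [ratio_le_one (pp c) (pp b) (le_max_right c 0)])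

theorem funA_lipschitz_three (δ a₁ b₁ c₁ a₂ b₂ c₂ : ℝ) (hδ : 0 < δ)
    (ha₁ : δ ≤ a₁) (ha₂ : δ ≤ a₂) :
    |funA a₁ b₁ c₁ b₁ - funA a₂ b₂ c₂ b₂| ≤
      2 / δ * (|a₁ - a₂| + |b₁ - b₂| + |c₁ - c₂|) := by
  have ha₁' : 0 < a₁ := hδ.trans_le ha₁
  have ha₂' : 0 < a₂ := hδ.trans_le ha₂
  have habs : 0 ≤ |a₁ - a₂| := abs_nonneg _
  have hbabs : 0 ≤ |b₁ - b₂| := abs_nonneg _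
  have hcabs : 0 ≤ |c₁ - c₂| := abs_nonneg _
  have hgoal : 2 / δ * (|a₁ - a₂| + |b₁ - b₂| + |c₁ - c₂|)
      = (2 * (|a₁ - a₂| + |b₁ - b₂| + |c₁ - c₂|)) / δ := by ring
  rw [hgoal]
  rcases le_or_gt b₁ a₁ with h1 | h1 <;> rcases le_or_gt b₂ a₂ with h2 | h2
  · -- both zero
    rw [funA_zero a₁ b₁ c₁ ha₁' h1, funA_zero a₂ b₂ c₂ ha₂' h2]
    simp
    positivity
  · -- funA₁ = 0, funA₂ small
    rw [funA_zero a₁ b₁ c₁ ha₁' h1]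
    have hb₂0 : b₂ ≠ 0 := by linarith
    have hpa₂ : pp a₂ = a₂ := max_eq_left ha₂'.le
    have hb₂ : pp b₂ = b₂ := max_eq_left (by linarith)
    have hm : max (pp a₂) (pp b₂) = b₂ := by
      rw [hpa₂, hb₂]; exact max_eq_right h2.le
    have hle : funA a₂ b₂ c₂ b₂ ≤ (b₂ - a₂) / b₂ := by
      refine (min_le_left _ _).trans ?_
      rw [hm, hpa₂, show (b₂ - a₂) / b₂ = 1 - a₂ / b₂ from by rw [sub_div, div_self hb₂0]]
    have hle2 : (b₂ - a₂) / b₂ ≤ (b₂ - a₂) / δ := by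
      apply div_le_div_of_nonneg_left (by linarith) hδ (by linarith)
    have hkey : b₂ - a₂ ≤ |a₁ - a₂| + |b₁ - b₂| := by
      have h3 := le_abs_self (a₁ - a₂)
      have h4 := neg_le_abs (b₁ - b₂)
      linarith
    rw [abs_of_nonpos (by linarith [funA_nonneg a₂ b₂ c₂ b₂])]
    have : -(0 - funA a₂ b₂ c₂ b₂) = funA a₂ b₂ c₂ b₂ := by ring
    rw [this]
    calc funA a₂ b₂ c₂ b₂ ≤ (b₂ - a₂) / δ := hle.trans hle2
      _ ≤ (2 * (|a₁ - a₂| + |b₁ - b₂| + |c₁ - c₂|)) / δ := by gcongr; linarith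
  · -- symmetric
    rw [funA_zero a₂ b₂ c₂ ha₂' h2]
    have hb₁0 : b₁ ≠ 0 := by linarith
    have hpa₁ : pp a₁ = a₁ := max_eq_left ha₁'.le
    have hb₁ : pp b₁ = b₁ := max_eq_left (by linarith)
    have hm : max (pp a₁) (pp b₁) = b₁ := by
      rw [hpa₁, hb₁]; exact max_eq_right h1.le
    have hle : funA a₁ b₁ c₁ b₁ ≤ (b₁ - a₁) / b₁ := by
      refine (min_le_left _ _).trans ?_
      rw [hm, hpa₁, show (b₁ - a₁) / b₁ = 1 - a₁ / b₁ from by rw [sub_div, div_self hb₁0]]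
    have hle2 : (b₁ - a₁) / b₁ ≤ (b₁ - a₁) / δ := by
      apply div_le_div_of_nonneg_left (by linarith) hδ (by linarith)
    have hkey : b₁ - a₁ ≤ |a₁ - a₂| + |b₁ - b₂| := by
      have h3 := neg_le_abs (a₁ - a₂)
      have h4 := le_abs_self (b₁ - b₂)
      linarith
    rw [abs_of_nonneg (by linarith [funA_nonneg a₁ b₁ c₁ b₁])]
    have : funA a₁ b₁ c₁ b₁ - 0 = funA a₁ b₁ c₁ b₁ := by ring
    rw [this]
    calc funA a₁ b₁ c₁ b₁ ≤ (b₁ - a₁) / δ := hle.trans hle2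
      _ ≤ (2 * (|a₁ - a₂| + |b₁ - b₂| + |c₁ - c₂|)) / δ := by gcongr; linarith
  · -- main case: b₁ > a₁, b₂ > a₂
    have hpa₁ : pp a₁ = a₁ := max_eq_left ha₁'.le
    have hpa₂ : pp a₂ = a₂ := max_eq_left ha₂'.le
    have hb₁ : pp b₁ = b₁ := max_eq_left (by linarith)
    have hb₂ : pp b₂ = b₂ := max_eq_left (by linarith)
    unfold funA
    rw [hpa₁, hpa₂, hb₁, hb₂]
    refine (abs_min_sub_min_le_max _ _ _ _).trans (max_le ?_ ?_)
    · -- first components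
      have heq : (1 - a₁ / max a₁ b₁) - (1 - a₂ / max a₂ b₂)
          = -(a₁ / max a₁ b₁ - a₂ / max a₂ b₂) := by ring
      rw [heq, abs_neg]
      have hM1 : δ ≤ max a₁ b₁ := ha₁.trans (le_max_left _ _)
      have hM2 : δ ≤ max a₂ b₂ := ha₂.trans (le_max_left _ _)
      have hk := key_div δ a₁ b₁ a₂ b₂ hδ ha₂'.le hM1 hM2
      have hmax : |max a₁ b₁ - max a₂ b₂| ≤ |a₁ - a₂| + |b₁ - b₂| :=
        (abs_max_sub_max_le_max a₁ b₁ a₂ b₂).trans (max_le (le_add_of_nonneg_right hbabs)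
          (le_add_of_nonneg_left habs))
      calc |a₁ / max a₁ b₁ - a₂ / max a₂ b₂|
          ≤ (|a₁ - a₂| + |max a₁ b₁ - max a₂ b₂|) / δ := hk
        _ ≤ (2 * (|a₁ - a₂| + |b₁ - b₂| + |c₁ - c₂|)) / δ := by gcongr ?_ / δ; linarith
    · -- second components
      have heq : (1 - pp c₁ / max (pp c₁) b₁) - (1 - pp c₂ / max (pp c₂) b₂)
          = -(pp c₁ / max (pp c₁) b₁ - pp c₂ / max (pp c₂) b₂) := by ring
      rw [heq, abs_neg]
      have hM1 : δ ≤ max (pp c₁) b₁ := by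
        refine le_trans (by linarith) (le_max_right _ _)
      have hM2 : δ ≤ max (pp c₂) b₂ := by
        refine le_trans (by linarith) (le_max_right _ _)
      have hk := key_div δ (pp c₁) b₁ (pp c₂) b₂ hδ (le_max_right c₂ 0) hM1 hM2
      have hc := pp_abs_sub c₁ c₂
      have hmax : |max (pp c₁) b₁ - max (pp c₂) b₂| ≤ |c₁ - c₂| + |b₁ - b₂| :=
        (abs_max_sub_max_le_max _ _ _ _).trans (max_le (by linarith [le_add_of_nonneg_right (a := |pp c₁ - pp c₂|) hbabs])
          (le_add_of_nonneg_left hcabs))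
      calc |pp c₁ / max (pp c₁) b₁ - pp c₂ / max (pp c₂) b₂|
          ≤ (|pp c₁ - pp c₂| + |max (pp c₁) b₁ - max (pp c₂) b₂|) / δ := hk
        _ ≤ (2 * (|a₁ - a₂| + |b₁ - b₂| + |c₁ - c₂|)) / δ := by gcongr ?_ / δ; linarith
end

section
/- Any maximal solution X of the modified system dX/dt = F(t, X⁺) with componentwise nonnegative initial condition X₀ ≥ 0 remains componentwise nonnegative for all times in its interval of existence; in particular it also solves the original system dX/dt = F(t, X). -/
lemma pp_nonneg' (x : ℝ) : 0 ≤ pp x := le_max_right _ _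

lemma one_sub_term_nonneg (x y : ℝ) : 0 ≤ 1 - pp x / max (pp x) (pp y) := by
  have h1 : pp x ≤ max (pp x) (pp y) := le_max_left _ _
  have h2 : (0:ℝ) ≤ max (pp x) (pp y) := le_trans (pp_nonneg' x) h1
  have := div_le_one_of_le₀ h1 h2
  linarith

lemma funA_first_zero {a : ℝ} (ha : 0 < a) (c d : ℝ) : funA a 0 c d = 0 := by
  have hpa : pp a = a := max_eq_left ha.le
  have hp0 : pp (0:ℝ) = 0 := max_eq_left le_rfl
  have h : (1 : ℝ) - pp a / max (pp a) (pp 0) = 0 := by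
    rw [hpa, hp0, max_eq_left ha.le, div_self ha.ne', sub_self]
  unfold funA
  rw [h]
  exact le_antisymm (min_le_left _ _) (le_min le_rfl (one_sub_term_nonneg _ _))

lemma funA_second_zero {c : ℝ} (hc : 0 < c) (a b : ℝ) : funA a b c 0 = 0 := by
  have hpc : pp c = c := max_eq_left hc.le
  have hp0 : pp (0:ℝ) = 0 := max_eq_left le_rfl
  have h : (1 : ℝ) - pp c / max (pp c) (pp 0) = 0 := by
    rw [hpc, hp0, max_eq_left hc.le, div_self hc.ne', sub_self]
  unfold funA
  rw [h]
  exact le_antisymm (min_le_right _ _) (le_min (one_sub_term_nonneg _ _) le_rfl)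

/-- ODE comparison lemma: a scalar function with nonnegative initial value whose
derivative is nonnegative wherever the function is nonpositive stays nonnegative. -/
lemma nonneg_of_deriv_cond (T : ℝ) (u d : ℝ → ℝ) (hu0 : 0 ≤ u 0)
    (hder : ∀ t ∈ Set.Ico (0:ℝ) T, HasDerivAt u (d t) t)
    (hpos : ∀ t ∈ Set.Ico (0:ℝ) T, u t ≤ 0 → 0 ≤ d t) :
    ∀ t ∈ Set.Ico (0:ℝ) T, 0 ≤ u t := by
  intro t₁ ht₁
  by_contra hneg
  push_neg at hneg
  have hcont : ContinuousOn u (Set.Icc 0 t₁) := fun x hx =>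
    ((hder x ⟨hx.1, lt_of_le_of_lt hx.2 ht₁.2⟩).continuousAt).continuousWithinAt
  set S : Set ℝ := Set.Icc 0 t₁ ∩ u ⁻¹' Set.Ici 0 with hSdef
  have hS0 : (0:ℝ) ∈ S := ⟨⟨le_rfl, ht₁.1⟩, hu0⟩
  have hSbdd : BddAbove S := ⟨t₁, fun x hx => hx.1.2⟩
  have hSclosed : IsClosed S :=
    hcont.preimage_isClosed_of_isClosed isClosed_Icc isClosed_Ici
  set s := sSup S with hs_def
  have hsS : s ∈ S := hSclosed.csSup_mem ⟨0, hS0⟩ hSbdd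
  have hs0 : 0 ≤ s := hsS.1.1
  have hst₁ : s ≤ t₁ := hsS.1.2
  have hus : 0 ≤ u s := hsS.2
  have hslt : s < t₁ := by
    rcases lt_or_eq_of_le hst₁ with h | h
    · exact h
    · exact absurd (h ▸ hus) (not_le.2 hneg)
  have hUneg : ∀ x, s < x → x ≤ t₁ → u x < 0 := by
    intro x hsx hxt
    by_contra hx
    push_neg at hx
    have : x ∈ S := ⟨⟨le_trans hs0 hsx.le, hxt⟩, hx⟩
    exact absurd (le_csSup hSbdd this) (not_le.2 hsx)
  have hmono : MonotoneOn u (Set.Icc s t₁) := by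
    apply monotoneOn_of_deriv_nonneg (convex_Icc s t₁)
      (hcont.mono (Set.Icc_subset_Icc hs0 le_rfl))
    · intro x hx
      rw [interior_Icc] at hx
      exact ((hder x ⟨le_trans hs0 hx.1.le,
        lt_trans hx.2 ht₁.2⟩).differentiableAt).differentiableWithinAt
    · intro x hx
      rw [interior_Icc] at hx
      have hx' : x ∈ Set.Ico (0:ℝ) T := ⟨le_trans hs0 hx.1.le, lt_trans hx.2 ht₁.2⟩
      rw [(hder x hx').deriv]
      exact hpos x hx' (hUneg x hx.1 hx.2.le).le
  have := hmono ⟨le_rfl, hslt.le⟩ ⟨hslt.le, le_rfl⟩ hslt.le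
  linarith

/-- Right-hand side of the chemostat system (S), with state
`X = (N, C, Q_N, Q_C, D, M)` and time-dependent parameters. -/
noncomputable def chemF (a α QCmin QNmin : ℝ)
    (Nin Cin VN KN VC KC μD μM ΘD ΘM mD : ℝ → ℝ)
    (t : ℝ) (X : Fin 6 → ℝ) : Fin 6 → ℝ :=
  let N := X 0; let C := X 1; let QN := X 2; let QC := X 3; let D := X 4; let M := X 5
  let τN := VN t * N / (KN t + N)
  let τC := VC t * C / (KC t + C)
  let g := funA QCmin QC QNmin QN
  let h := funA QCmin QC (α * QN) QC
  ![a * (Nin t - N) - τN * D,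
    a * (Cin t - C) - τC * D,
    τN - ΘD t * g - μD t * g * QN,
    τC - α * (ΘD t * g) - ΘM t * h - μD t * g * QC,
    μD t * g * D - (a + mD t) * D,
    μM t * h * D - a * M]

noncomputable def posPart6 (X : Fin 6 → ℝ) : Fin 6 → ℝ := fun i => max (X i) 0

def paramBounds (M₀ a α QCmin QNmin : ℝ)
    (Nin Cin VN KN VC KC μD μM ΘD ΘM mD : ℝ → ℝ) : Prop :=
  0 < M₀ ∧
  a ∈ Set.Ioo (1/M₀) M₀ ∧ α ∈ Set.Ioo (1/M₀) M₀ ∧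
  QCmin ∈ Set.Ioo (1/M₀) M₀ ∧ QNmin ∈ Set.Ioo (1/M₀) M₀ ∧
  Continuous mD ∧ (∀ t, mD t ∈ Set.Ioo 0 M₀) ∧
  (∀ f ∈ [Nin, Cin, VN, KN, VC, KC, μD, μM, ΘD, ΘM],
    Continuous f ∧ ∀ t, f t ∈ Set.Ioo (1/M₀) M₀)

/-- The structural property: whenever the `i`-th coordinate is nonpositive, the `i`-th
component of the vector field evaluated at the positive part is nonnegative. -/
lemma chemF_struct (a α QCmin QNmin : ℝ)
    (Nin Cin VN KN VC KC μD μM ΘD ΘM mD : ℝ → ℝ) (t : ℝ)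
    (ha : 0 < a) (hQCm : 0 < QCmin) (hQNm : 0 < QNmin)
    (hNin : 0 < Nin t) (hCin : 0 < Cin t) (hVN : 0 < VN t) (hKN : 0 < KN t)
    (hVC : 0 < VC t) (hKC : 0 < KC t) (hμM : 0 < μM t)
    (Z : Fin 6 → ℝ) (i : Fin 6) (hi : Z i ≤ 0) :
    0 ≤ chemF a α QCmin QNmin Nin Cin VN KN VC KC μD μM ΘD ΘM mD t (posPart6 Z) i := by
  have hY : ∀ j, 0 ≤ posPart6 Z j := fun j => le_max_right _ _
  have hτN : 0 ≤ VN t * posPart6 Z 0 / (KN t + posPart6 Z 0) :=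
    div_nonneg (mul_nonneg hVN.le (hY 0)) (add_pos_of_pos_of_nonneg hKN (hY 0)).le
  have hτC : 0 ≤ VC t * posPart6 Z 1 / (KC t + posPart6 Z 1) :=
    div_nonneg (mul_nonneg hVC.le (hY 1)) (add_pos_of_pos_of_nonneg hKC (hY 1)).le
  fin_cases i
  · -- i = 0
    have h0 : posPart6 Z 0 = 0 := max_eq_right hi
    show 0 ≤ a * (Nin t - posPart6 Z 0) -
      VN t * posPart6 Z 0 / (KN t + posPart6 Z 0) * posPart6 Z 4
    rw [h0]
    simp only [mul_zero, zero_div, zero_mul, sub_zero]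
    exact mul_nonneg ha.le hNin.le
  · -- i = 1
    have h1 : posPart6 Z 1 = 0 := max_eq_right hi
    show 0 ≤ a * (Cin t - posPart6 Z 1) -
      VC t * posPart6 Z 1 / (KC t + posPart6 Z 1) * posPart6 Z 4
    rw [h1]
    simp only [mul_zero, zero_div, zero_mul, sub_zero]
    exact mul_nonneg ha.le hCin.le
  · -- i = 2
    have h2 : posPart6 Z 2 = 0 := max_eq_right hi
    show 0 ≤ VN t * posPart6 Z 0 / (KN t + posPart6 Z 0) -
      ΘD t * funA QCmin (posPart6 Z 3) QNmin (posPart6 Z 2) -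
      μD t * funA QCmin (posPart6 Z 3) QNmin (posPart6 Z 2) * posPart6 Z 2
    rw [h2, funA_second_zero hQNm]
    simpa using hτN
  · -- i = 3
    have h3 : posPart6 Z 3 = 0 := max_eq_right hi
    show 0 ≤ VC t * posPart6 Z 1 / (KC t + posPart6 Z 1) -
      α * (ΘD t * funA QCmin (posPart6 Z 3) QNmin (posPart6 Z 2)) -
      ΘM t * funA QCmin (posPart6 Z 3) (α * posPart6 Z 2) (posPart6 Z 3) -
      μD t * funA QCmin (posPart6 Z 3) QNmin (posPart6 Z 2) * posPart6 Z 3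
    rw [h3, funA_first_zero hQCm, funA_first_zero hQCm]
    simpa using hτC
  · -- i = 4
    have h4 : posPart6 Z 4 = 0 := max_eq_right hi
    show 0 ≤ μD t * funA QCmin (posPart6 Z 3) QNmin (posPart6 Z 2) * posPart6 Z 4 -
      (a + mD t) * posPart6 Z 4
    rw [h4]
    simp
  · -- i = 5
    have h5 : posPart6 Z 5 = 0 := max_eq_right hi
    show 0 ≤ μM t * funA QCmin (posPart6 Z 3) (α * posPart6 Z 2) (posPart6 Z 3) *
      posPart6 Z 4 - a * posPart6 Z 5
    rw [h5]
    simp only [mul_zero, sub_zero]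
    exact mul_nonneg (mul_nonneg hμM.le (funA_nonneg _ _ _ _)) (hY 4)

/-- Positivity of solutions of the modified system `dX/dt = F(t, X⁺)`, and the
fact that they solve the original system `dX/dt = F(t, X)`. -/
theorem chemF_solution_nonneg (M₀ a α QCmin QNmin : ℝ)
    (Nin Cin VN KN VC KC μD μM ΘD ΘM mD : ℝ → ℝ)
    (hb : paramBounds M₀ a α QCmin QNmin Nin Cin VN KN VC KC μD μM ΘD ΘM mD)
    (T : ℝ) (X : ℝ → Fin 6 → ℝ)
    (hX0 : ∀ i, 0 ≤ X 0 i)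
    (hsol : ∀ t ∈ Set.Ico (0:ℝ) T,
      HasDerivAt X
        (chemF a α QCmin QNmin Nin Cin VN KN VC KC μD μM ΘD ΘM mD t
          (posPart6 (X t))) t) :
    (∀ t ∈ Set.Ico (0:ℝ) T, ∀ i, 0 ≤ X t i) ∧
    (∀ t ∈ Set.Ico (0:ℝ) T,
      HasDerivAt X
        (chemF a α QCmin QNmin Nin Cin VN KN VC KC μD μM ΘD ΘM mD t (X t)) t) := by
  obtain ⟨hM₀, ha, hα, hQCm, hQNm, hmDc, hmDb, hlist⟩ := hb
  have hM₀inv : 0 < 1 / M₀ := by positivity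
  have ha' : 0 < a := lt_trans hM₀inv ha.1
  have hQCm' : 0 < QCmin := lt_trans hM₀inv hQCm.1
  have hQNm' : 0 < QNmin := lt_trans hM₀inv hQNm.1
  have hf : ∀ f ∈ [Nin, Cin, VN, KN, VC, KC, μD, μM, ΘD, ΘM], ∀ t, 0 < f t := by
    intro f hfmem t
    exact lt_trans hM₀inv ((hlist f hfmem).2 t).1
  have hNin := hf Nin (by simp)
  have hCin := hf Cin (by simp)
  have hVN := hf VN (by simp)
  have hKN := hf KN (by simp)
  have hVC := hf VC (by simp)
  have hKC := hf KC (by simp)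
  have hμM := hf μM (by simp)
  have hnonneg : ∀ t ∈ Set.Ico (0:ℝ) T, ∀ i, 0 ≤ X t i := by
    have key : ∀ i : Fin 6, ∀ t ∈ Set.Ico (0:ℝ) T, 0 ≤ X t i := by
      intro i
      apply nonneg_of_deriv_cond T (fun t => X t i)
        (fun t => chemF a α QCmin QNmin Nin Cin VN KN VC KC μD μM ΘD ΘM mD t
          (posPart6 (X t)) i) (hX0 i)
      · intro t ht
        exact hasDerivAt_pi.1 (hsol t ht) i
      · intro t _ hneg
        exact chemF_struct a α QCmin QNmin Nin Cin VN KN VC KC μD μM ΘD ΘM mD t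
          ha' hQCm' hQNm' (hNin t) (hCin t) (hVN t) (hKN t) (hVC t) (hKC t) (hμM t)
          (X t) i hneg
    intro t ht i
    exact key i t ht
  refine ⟨hnonneg, ?_⟩
  intro t ht
  have hpp : posPart6 (X t) = X t := by
    funext i
    exact max_eq_left (hnonneg t ht i)
  rw [← hpp]
  exact hsol t ht
end

section
/- Let X = (N, C, Q_N, Q_C, D, M) be the nonnegative global solution of the chemostat system with nonnegative initial data. If Q_N(t₀) ≥ Q_N^min for some t₀ ≥ 0, then Q_N(t) ≥ Q_N^min for all t ≥ t₀. -/
lemma funA_eq_zero {a b c d : ℝ} (ha : 0 < a) (hc : 0 < c) (hd0 : 0 ≤ d)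
    (hdc : d ≤ c) : funA a b c d = 0 := by
  have hppc : pp c = c := max_eq_left hc.le
  have hppd : pp d = d := max_eq_left hd0
  have hmax : max (pp c) (pp d) = c := by rw [hppc, hppd]; exact max_eq_left hdc
  have h2 : 1 - pp c / max (pp c) (pp d) = 0 := by
    rw [hmax, hppc, div_self hc.ne']; ring
  have hppa : pp a = a := max_eq_left ha.le
  have hmaxa : 0 < max (pp a) (pp b) :=
    lt_of_lt_of_le (show (0:ℝ) < pp a by rw [hppa]; exact ha) (le_max_left _ _)
  have h1 : 0 ≤ 1 - pp a / max (pp a) (pp b) := by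
    have : pp a / max (pp a) (pp b) ≤ 1 :=
      div_le_one_of_le₀ (le_max_left _ _) hmaxa.le
    linarith
  rw [funA, h2]
  exact min_eq_right (h2 ▸ h1)

/-- Invariance of the region `Q_N ≥ Q_N^min`: biologically relevant solutions
remain biologically relevant.  Here `X = (N, C, Q_N, Q_C, D, M)` so the
nitrogen quota is the component `X 2`. -/
theorem chemF_QN_threshold (M₀ a α QCmin QNmin : ℝ)
    (Nin Cin VN KN VC KC μD μM ΘD ΘM mD : ℝ → ℝ)
    (hb : paramBounds M₀ a α QCmin QNmin Nin Cin VN KN VC KC μD μM ΘD ΘM mD)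
    (X : ℝ → Fin 6 → ℝ)
    (hnn : ∀ t ∈ Set.Ici (0:ℝ), ∀ i, 0 ≤ X t i)
    (hsol : ∀ t ∈ Set.Ici (0:ℝ),
      HasDerivAt X
        (chemF a α QCmin QNmin Nin Cin VN KN VC KC μD μM ΘD ΘM mD t (X t)) t)
    (t₀ : ℝ) (ht₀ : 0 ≤ t₀) (hQN : QNmin ≤ X t₀ 2) :
    ∀ t, t₀ ≤ t → QNmin ≤ X t 2 := by
  obtain ⟨hM₀, haa, hα, hQC, hQNm, hmDc, hmDb, hlist⟩ := hb
  have hM₀inv : 0 < 1/M₀ := by positivity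
  have hQNmin_pos : 0 < QNmin := lt_trans hM₀inv hQNm.1
  have hQCmin_pos : 0 < QCmin := lt_trans hM₀inv hQC.1
  obtain ⟨hVNc, hVNb⟩ := hlist VN (by simp)
  obtain ⟨hKNc, hKNb⟩ := hlist KN (by simp)
  set f : ℝ → ℝ := fun t => X t 2 with hf
  have hderiv : ∀ t ∈ Set.Ici (0:ℝ), HasDerivAt f
      (chemF a α QCmin QNmin Nin Cin VN KN VC KC μD μM ΘD ΘM mD t (X t) 2) t :=
    fun t ht => (hasDerivAt_pi.mp (hsol t ht)) 2
  have hval : ∀ t, chemF a α QCmin QNmin Nin Cin VN KN VC KC μD μM ΘD ΘM mD t (X t) 2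
      = VN t * X t 0 / (KN t + X t 0)
        - ΘD t * funA QCmin (X t 3) QNmin (X t 2)
        - μD t * funA QCmin (X t 3) QNmin (X t 2) * X t 2 := by
    intro t; rfl
  have key : ∀ t, 0 ≤ t → f t ≤ QNmin → ∃ c, 0 ≤ c ∧ HasDerivAt f c t := by
    intro t ht hle
    refine ⟨_, ?_, hderiv t ht⟩
    rw [hval]
    have hg : funA QCmin (X t 3) QNmin (X t 2) = 0 :=
      funA_eq_zero hQCmin_pos hQNmin_pos (hnn t ht 2) hle
    rw [hg]
    have hVN : 0 < VN t := lt_trans hM₀inv (hVNb t).1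
    have hKN : 0 < KN t := lt_trans hM₀inv (hKNb t).1
    have hN : 0 ≤ X t 0 := hnn t ht 0
    have : 0 ≤ VN t * X t 0 / (KN t + X t 0) :=
      div_nonneg (mul_nonneg hVN.le hN) (by linarith)
    linarith
  intro t₁ ht₁
  by_contra hcon
  push_neg at hcon
  have hcontf : ContinuousOn f (Set.Icc t₀ t₁) := fun t ht =>
    ((hderiv t (le_trans ht₀ ht.1)).continuousAt).continuousWithinAt
  set S := Set.Icc t₀ t₁ ∩ f ⁻¹' Set.Ici QNmin with hS
  have hSne : S.Nonempty := ⟨t₀, ⟨le_refl _, ht₁⟩, hQN⟩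
  have hSbdd : BddAbove S := ⟨t₁, fun x hx => hx.1.2⟩
  have hSclosed : IsClosed S :=
    hcontf.preimage_isClosed_of_isClosed isClosed_Icc isClosed_Ici
  set s := sSup S with hs
  have hsmem : s ∈ S := hSclosed.csSup_mem hSne hSbdd
  obtain ⟨⟨hst₀, hst₁⟩, hfs⟩ := hsmem
  have hslt : s < t₁ := lt_of_le_of_ne hst₁ fun h => absurd (show QNmin ≤ X t₁ 2 from h ▸ hfs) (not_le.mpr hcon)
  have hlt : ∀ u ∈ Set.Ioc s t₁, f u < QNmin := by
    intro u hu
    by_contra h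
    push_neg at h
    exact absurd (le_csSup hSbdd ⟨⟨le_trans hst₀ hu.1.le, hu.2⟩, h⟩) (not_le.mpr hu.1)
  have hderiv' : ∀ u ∈ Set.Ioo s t₁, ∃ c, 0 ≤ c ∧ HasDerivAt f c u := by
    intro u hu
    exact key u (le_trans ht₀ (le_trans hst₀ hu.1.le)) (hlt u ⟨hu.1, hu.2.le⟩).le
  have hmono : MonotoneOn f (Set.Icc s t₁) := by
    apply monotoneOn_of_deriv_nonneg (convex_Icc s t₁)
    · exact hcontf.mono (Set.Icc_subset_Icc hst₀ le_rfl)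
    · rw [interior_Icc]
      intro u hu
      obtain ⟨c, _, hd⟩ := hderiv' u hu
      exact hd.differentiableAt.differentiableWithinAt
    · rw [interior_Icc]
      intro u hu
      obtain ⟨c, hc, hd⟩ := hderiv' u hu
      rw [hd.deriv]; exact hc
  have := hmono ⟨le_refl s, hslt.le⟩ ⟨hslt.le, le_refl t₁⟩ hslt.le
  have hfs' : QNmin ≤ f s := hfs
  have hft₁ : f t₁ = X t₁ 2 := rfl
  linarith
end
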